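/- Let q, r : ℝ × ℝ → ℂ be smooth functions of (x,t), and set Ψ = q·E + r·Γ, where E is the 2×2 identity matrix and Γ = [[0,0],[1,0]] (so Ψ = [[q,0],[r,q]]). Let Ψ* denote the entrywise complex conjugate [[conj(q),0],[conj(r),conj(q)]]. Then the matrix NLS equation i·∂t Ψ + ∂x² Ψ + 2 Ψ²·Ψ* = 0 holds (as an identity of 2×2 matrix-valued functions) if and only if the pair (q,r) satisfies the Frobenius NLS system: i·∂t q + ∂x² q + 2 q² conj(q) = 0 and i·∂t r + ∂x² r + 2 q² conj(r) + 4 q conj(q) r = 0. -/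

import Mathlib

/-! Ψ lies in the commutative algebra `ℂE ⊕ ℂΓ` with `Γ² = 0`, where
`(aE + bΓ)(cE + dΓ) = acE + (ad + bc)Γ`, and `∂x`, `∂t` act coefficientwise. Hence both sides of
the matrix NLS equation are of the form `αE + βΓ`, and it holds iff `α = β = 0`: the `E`-coefficient
is the `q`-equation and the `Γ`-coefficient the `r`-equation. -/

open Complex

/-- Entrywise partial derivative in `x` of a matrix-valued function of `(x,t)`. -/
noncomputable def mDX {m : Type*} (M : ℝ → ℝ → Matrix m m ℂ) : ℝ → ℝ → Matrix m m ℂ :=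
  fun x t => Matrix.of fun i j => deriv (fun x' => M x' t i j) x

/-- Entrywise partial derivative in `t` of a matrix-valued function of `(x,t)`. -/
noncomputable def mDT {m : Type*} (M : ℝ → ℝ → Matrix m m ℂ) : ℝ → ℝ → Matrix m m ℂ :=
  fun x t => Matrix.of fun i j => deriv (fun t' => M x t' i j) t

def frobeniusMatrix {R : Type*} [CommRing R] (a b : R) : Matrix (Fin 2) (Fin 2) R :=
  a • 1 + b • !![0, 0; 1, 0]

section Algebra

variable {R : Type*} [CommRing R]

theorem frobeniusMatrix_eq_of (a b : R) : frobeniusMatrix a b = !![a, 0; b, a] := by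
  ext i j
  fin_cases i <;> fin_cases j <;> simp [frobeniusMatrix]

theorem frobeniusMatrix_eq_zero_iff {a b : R} : frobeniusMatrix a b = 0 ↔ a = 0 ∧ b = 0 := by
  rw [frobeniusMatrix_eq_of, ← Matrix.ext_iff]
  constructor
  · intro h
    exact ⟨by simpa using h 0 0, by simpa using h 1 0⟩
  · rintro ⟨rfl, rfl⟩ i j
    fin_cases i <;> fin_cases j <;> rfl

theorem frobeniusMatrix_mul (a b c d : R) :
    frobeniusMatrix a b * frobeniusMatrix c d = frobeniusMatrix (a * c) (a * d + b * c) := by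
  simp only [frobeniusMatrix_eq_of]
  ext i j
  fin_cases i <;> fin_cases j <;> simp [Matrix.mul_apply, Fin.sum_univ_two, add_comm]

theorem frobeniusMatrix_add (a b c d : R) :
    frobeniusMatrix a b + frobeniusMatrix c d = frobeniusMatrix (a + c) (b + d) := by
  simp only [frobeniusMatrix, add_smul]
  abel

theorem smul_frobeniusMatrix (s a b : R) :
    s • frobeniusMatrix a b = frobeniusMatrix (s * a) (s * b) := by
  simp only [frobeniusMatrix, smul_add, smul_smul]

end Algebra

section Derivatives

variable (a b : ℝ → ℝ → ℂ)

theorem mDX_frobeniusMatrix :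
    mDX (fun x t => frobeniusMatrix (a x t) (b x t)) =
      fun x t => frobeniusMatrix (deriv (fun x' => a x' t) x) (deriv (fun x' => b x' t) x) := by
  funext x t
  simp only [frobeniusMatrix_eq_of]
  ext i j
  fin_cases i <;> fin_cases j <;> simp [mDX]

theorem mDT_frobeniusMatrix :
    mDT (fun x t => frobeniusMatrix (a x t) (b x t)) =
      fun x t => frobeniusMatrix (deriv (fun t' => a x t') t) (deriv (fun t' => b x t') t) := by
  funext x t
  simp only [frobeniusMatrix_eq_of]
  ext i j
  fin_cases i <;> fin_cases j <;> simp [mDT]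

end Derivatives

theorem statement2 (q r : ℝ → ℝ → ℂ)
    (Ψ Ψs : ℝ → ℝ → Matrix (Fin 2) (Fin 2) ℂ)
    (hΨ : ∀ x t : ℝ, Ψ x t = q x t • (1 : Matrix (Fin 2) (Fin 2) ℂ) + r x t • !![0, 0; 1, 0])
    (hΨs : ∀ x t : ℝ, Ψs x t =
      !![(starRingEnd ℂ) (q x t), 0; (starRingEnd ℂ) (r x t), (starRingEnd ℂ) (q x t)]) :
    (∀ x t : ℝ,
        I • mDT Ψ x t + mDX (mDX Ψ) x t + (2 : ℂ) • (Ψ x t * Ψ x t * Ψs x t) = 0)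
    ↔ (∀ x t : ℝ,
        (I * deriv (fun t' => q x t') t + deriv (fun x' => deriv (fun x'' => q x'' t) x') x
          + 2 * (q x t) ^ 2 * (starRingEnd ℂ) (q x t) = 0)
        ∧ (I * deriv (fun t' => r x t') t + deriv (fun x' => deriv (fun x'' => r x'' t) x') x
          + 2 * (q x t) ^ 2 * (starRingEnd ℂ) (r x t)
          + 4 * q x t * (starRingEnd ℂ) (q x t) * r x t = 0)) := by
  have hΨ' : Ψ = fun x t => frobeniusMatrix (q x t) (r x t) := funext₂ hΨ
  have hΨs' (x t : ℝ) :
      Ψs x t = frobeniusMatrix ((starRingEnd ℂ) (q x t)) ((starRingEnd ℂ) (r x t)) := by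
    rw [hΨs, frobeniusMatrix_eq_of]
  subst hΨ'
  simp only [hΨs', mDT_frobeniusMatrix, mDX_frobeniusMatrix, frobeniusMatrix_mul,
    smul_frobeniusMatrix, frobeniusMatrix_add, frobeniusMatrix_eq_zero_iff]
  refine forall₂_congr fun x t => and_congr ?_ ?_ <;> constructor <;> intro h <;>
    linear_combination h
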